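/- arXiv:2008.07161 — 2 statements merged into one kernel-verified Lean document; each statement's English description precedes it below -/
import Mathlib

section
/- Let κ = algebraMap ℝ 𝔠ₙ x + ι v be a paravector with v ≠ 0 and let ζ ∈ ℂ with ζ ∉ {s₊(κ), s₋(κ)}. Then ζ • 1 − 1 ⊗ₜ κ is a unit of 𝔎ₙ and its inverse equals (ζ − s₊(κ))⁻¹ • ι₊(κ) + (ζ − s₋(κ))⁻¹ • ι₋(κ). -/
open scoped TensorProduct

/-! With `𝔰 = ι(v / ‖v‖)` one has `𝔰² = -1`, and `ζ - κ = (ζ - x) - ‖v‖ 𝔰`. For `w = ±i`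
the element `1 - w 𝔰` satisfies `𝔰 (1 - w 𝔰) = (1 - w 𝔰) 𝔰 = w (1 - w 𝔰)`, so `ζ - κ` acts on
`ι₊ = (1 - i 𝔰)/2` and `ι₋ = (1 + i 𝔰)/2` by the scalars `ζ - s₊` and `ζ - s₋`. Since
`ι₊ + ι₋ = 1`, dividing each projection by its scalar gives a two-sided inverse. -/

/-- The paravector `κ = x + ι v` in the Clifford algebra. -/
noncomputable def paravec {n : ℕ} (Q : QuadraticForm ℝ (EuclideanSpace ℝ (Fin n)))
    (x : ℝ) (v : EuclideanSpace ℝ (Fin n)) : CliffordAlgebra Q :=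
  algebraMap ℝ (CliffordAlgebra Q) x + CliffordAlgebra.ι Q v

/-- The eigenvalue `s₊(κ) = x + i‖v‖`. -/
noncomputable def sPlus {n : ℕ} (x : ℝ) (v : EuclideanSpace ℝ (Fin n)) : ℂ :=
  (x : ℂ) + ‖v‖ * Complex.I

/-- The eigenvalue `s₋(κ) = x - i‖v‖`. -/
noncomputable def sMinus {n : ℕ} (x : ℝ) (v : EuclideanSpace ℝ (Fin n)) : ℂ :=
  (x : ℂ) - ‖v‖ * Complex.I

/-- The idempotent `ι₊(κ) = (1/2) • (1 - i • (1 ⊗ 𝔰_κ))` in the complexification. -/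
noncomputable def iotaP {n : ℕ} (Q : QuadraticForm ℝ (EuclideanSpace ℝ (Fin n)))
    (v : EuclideanSpace ℝ (Fin n)) : ℂ ⊗[ℝ] CliffordAlgebra Q :=
  (1/2 : ℝ) • (1 - Complex.I • ((1 : ℂ) ⊗ₜ[ℝ] CliffordAlgebra.ι Q (‖v‖⁻¹ • v)))

/-- The idempotent `ι₋(κ) = (1/2) • (1 + i • (1 ⊗ 𝔰_κ))` in the complexification. -/
noncomputable def iotaM {n : ℕ} (Q : QuadraticForm ℝ (EuclideanSpace ℝ (Fin n)))
    (v : EuclideanSpace ℝ (Fin n)) : ℂ ⊗[ℝ] CliffordAlgebra Q :=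
  (1/2 : ℝ) • (1 + Complex.I • ((1 : ℂ) ⊗ₜ[ℝ] CliffordAlgebra.ι Q (‖v‖⁻¹ • v)))

section SquareRootOfNegOne

variable {K R : Type*} [CommRing K] [Ring R] [Algebra K R] {s : R}

theorem mul_one_sub_smul_of_mul_self_eq_neg_one (hs : s * s = -1) {w : K} (hw : w * w = -1) :
    s * (1 - w • s) = w • (1 - w • s) := by
  rw [mul_sub, mul_one, mul_smul_comm, hs, smul_sub, smul_smul, hw]
  module

theorem one_sub_smul_mul_of_mul_self_eq_neg_one (hs : s * s = -1) {w : K} (hw : w * w = -1) :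
    (1 - w • s) * s = w • (1 - w • s) := by
  rw [sub_mul, one_mul, smul_mul_assoc, hs, ← mul_one_sub_smul_of_mul_self_eq_neg_one hs hw,
    mul_sub, mul_one, mul_smul_comm, hs]

theorem smul_one_sub_smul_mul_one_sub_smul (hs : s * s = -1) {w : K} (hw : w * w = -1)
    (a r : K) : (a • 1 - r • s) * (1 - w • s) = (a - r * w) • (1 - w • s) := by
  rw [sub_mul, smul_mul_assoc, smul_mul_assoc, one_mul,
    mul_one_sub_smul_of_mul_self_eq_neg_one hs hw, smul_smul, sub_smul]

theorem one_sub_smul_mul_smul_one_sub_smul (hs : s * s = -1) {w : K} (hw : w * w = -1)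
    (a r : K) : (1 - w • s) * (a • 1 - r • s) = (a - r * w) • (1 - w • s) := by
  rw [mul_sub, mul_smul_comm, mul_smul_comm, mul_one,
    one_sub_smul_mul_of_mul_self_eq_neg_one hs hw, smul_smul, sub_smul]

end SquareRootOfNegOne

section ComplexStructure

variable {R : Type*} [Ring R] [Algebra ℂ R] {s : R}

theorem one_add_I_smul_eq_one_sub_neg_I_smul (s : R) : (1 : R) + Complex.I • s = 1 - (-Complex.I) • s := by
  rw [neg_smul, sub_neg_eq_add]

theorem half_smul_add_half_smul (s : R) :
    (1 / 2 : ℂ) • (1 - Complex.I • s) + (1 / 2 : ℂ) • (1 + Complex.I • s) = 1 := by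
  module

theorem smul_one_sub_smul_mul_spectral_sum (hs : s * s = -1) {a r : ℂ}
    (ha : a - r * Complex.I ≠ 0) (hb : a + r * Complex.I ≠ 0) :
    (a • 1 - r • s) * ((a - r * Complex.I)⁻¹ • ((1 / 2 : ℂ) • (1 - Complex.I • s)) +
      (a + r * Complex.I)⁻¹ • ((1 / 2 : ℂ) • (1 + Complex.I • s))) = 1 := by
  have hconj : a + r * Complex.I = a - r * -Complex.I := by ring
  rw [hconj] at hb ⊢
  rw [one_add_I_smul_eq_one_sub_neg_I_smul]
  simp only [mul_add, mul_smul_comm, smul_one_sub_smul_mul_one_sub_smul hs Complex.I_mul_I,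
    smul_one_sub_smul_mul_one_sub_smul hs (by simp : -Complex.I * -Complex.I = -1)]
  rw [smul_comm (1 / 2 : ℂ) (a - r * Complex.I), inv_smul_smul₀ ha,
    smul_comm (1 / 2 : ℂ) (a - r * -Complex.I), inv_smul_smul₀ hb, ← one_add_I_smul_eq_one_sub_neg_I_smul,
    half_smul_add_half_smul]

theorem spectral_sum_mul_smul_one_sub_smul (hs : s * s = -1) {a r : ℂ}
    (ha : a - r * Complex.I ≠ 0) (hb : a + r * Complex.I ≠ 0) :
    ((a - r * Complex.I)⁻¹ • ((1 / 2 : ℂ) • (1 - Complex.I • s)) +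
      (a + r * Complex.I)⁻¹ • ((1 / 2 : ℂ) • (1 + Complex.I • s))) * (a • 1 - r • s) = 1 := by
  have hconj : a + r * Complex.I = a - r * -Complex.I := by ring
  rw [hconj] at hb ⊢
  rw [one_add_I_smul_eq_one_sub_neg_I_smul]
  simp only [add_mul, smul_mul_assoc, one_sub_smul_mul_smul_one_sub_smul hs Complex.I_mul_I,
    one_sub_smul_mul_smul_one_sub_smul hs (by simp : -Complex.I * -Complex.I = -1)]
  rw [smul_comm (1 / 2 : ℂ) (a - r * Complex.I), inv_smul_smul₀ ha,
    smul_comm (1 / 2 : ℂ) (a - r * -Complex.I), inv_smul_smul₀ hb, ← one_add_I_smul_eq_one_sub_neg_I_smul,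
    half_smul_add_half_smul]

end ComplexStructure

theorem one_tmul_ι_mul_self {A M : Type*} [Ring A] [Algebra ℝ A] [AddCommGroup M] [Module ℝ M]
    {Q : QuadraticForm ℝ M} {u : M} (hu : Q u = -1) :
    ((1 : A) ⊗ₜ[ℝ] CliffordAlgebra.ι Q u) * ((1 : A) ⊗ₜ[ℝ] CliffordAlgebra.ι Q u) = -1 := by
  rw [Algebra.TensorProduct.tmul_mul_tmul, CliffordAlgebra.ι_sq_scalar, hu, map_neg, map_one,
    mul_one, TensorProduct.tmul_neg, ← Algebra.TensorProduct.one_def]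

section Paravector

variable {n : ℕ} {Q : QuadraticForm ℝ (EuclideanSpace ℝ (Fin n))} {v : EuclideanSpace ℝ (Fin n)}

theorem apply_inv_norm_smul_self (hQ : ∀ v : EuclideanSpace ℝ (Fin n), Q v = -‖v‖ ^ 2)
    (hv : v ≠ 0) : Q (‖v‖⁻¹ • v) = -1 := by
  rw [hQ, norm_smul, norm_inv, norm_norm, inv_mul_cancel₀ (norm_ne_zero_iff.mpr hv), one_pow]

theorem smul_one_sub_one_tmul_paravec (hv : v ≠ 0) (x : ℝ) (ζ : ℂ) :
    ζ • (1 : ℂ ⊗[ℝ] CliffordAlgebra Q) - (1 : ℂ) ⊗ₜ[ℝ] paravec Q x v =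
      (ζ - x) • 1 - (‖v‖ : ℂ) • ((1 : ℂ) ⊗ₜ[ℝ] CliffordAlgebra.ι Q (‖v‖⁻¹ • v)) := by
  have hv' : CliffordAlgebra.ι Q v = ‖v‖ • CliffordAlgebra.ι Q (‖v‖⁻¹ • v) := by
    rw [← map_smul, smul_inv_smul₀ (norm_ne_zero_iff.mpr hv)]
  rw [paravec, TensorProduct.tmul_add, hv', TensorProduct.tmul_smul,
    Algebra.algebraMap_eq_smul_one, TensorProduct.tmul_smul, ← Algebra.TensorProduct.one_def,
    sub_smul, ← Complex.coe_algebraMap, algebraMap_smul, algebraMap_smul]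
  abel

theorem iotaP_eq : iotaP Q v =
    (1 / 2 : ℂ) • (1 - Complex.I • ((1 : ℂ) ⊗ₜ[ℝ] CliffordAlgebra.ι Q (‖v‖⁻¹ • v))) := by
  rw [iotaP, ← algebraMap_smul ℂ (1 / 2 : ℝ)]
  norm_num

theorem iotaM_eq : iotaM Q v =
    (1 / 2 : ℂ) • (1 + Complex.I • ((1 : ℂ) ⊗ₜ[ℝ] CliffordAlgebra.ι Q (‖v‖⁻¹ • v))) := by
  rw [iotaM, ← algebraMap_smul ℂ (1 / 2 : ℝ)]
  norm_num

end Paravector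

theorem stmt5_general {n : ℕ}
    (Q : QuadraticForm ℝ (EuclideanSpace ℝ (Fin n)))
    (hQ : ∀ v : EuclideanSpace ℝ (Fin n), Q v = -‖v‖ ^ 2)
    (x : ℝ) (v : EuclideanSpace ℝ (Fin n)) (hv : v ≠ 0)
    (zeta : ℂ) (hz : zeta ∉ ({sPlus x v, sMinus x v} : Set ℂ)) :
    IsUnit (zeta • (1 : ℂ ⊗[ℝ] CliffordAlgebra Q) - (1 : ℂ) ⊗ₜ[ℝ] paravec Q x v) ∧
    (zeta • (1 : ℂ ⊗[ℝ] CliffordAlgebra Q) - (1 : ℂ) ⊗ₜ[ℝ] paravec Q x v) *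
        ((zeta - sPlus x v)⁻¹ • iotaP Q v + (zeta - sMinus x v)⁻¹ • iotaM Q v) = 1 ∧
    ((zeta - sPlus x v)⁻¹ • iotaP Q v + (zeta - sMinus x v)⁻¹ • iotaM Q v) *
        (zeta • (1 : ℂ ⊗[ℝ] CliffordAlgebra Q) - (1 : ℂ) ⊗ₜ[ℝ] paravec Q x v) = 1 := by
  set s : ℂ ⊗[ℝ] CliffordAlgebra Q := (1 : ℂ) ⊗ₜ[ℝ] CliffordAlgebra.ι Q (‖v‖⁻¹ • v)
  have hs : s * s = -1 := one_tmul_ι_mul_self (apply_inv_norm_smul_self hQ hv)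
  have hplus : zeta - sPlus x v = (zeta - x) - ‖v‖ * Complex.I := by rw [sPlus]; ring
  have hminus : zeta - sMinus x v = (zeta - x) + ‖v‖ * Complex.I := by rw [sMinus]; ring
  obtain ⟨hz_plus, hz_minus⟩ : zeta ≠ sPlus x v ∧ zeta ≠ sMinus x v := by simpa [not_or] using hz
  have ha : zeta - x - ‖v‖ * Complex.I ≠ 0 := hplus ▸ sub_ne_zero.mpr hz_plus
  have hb : zeta - x + ‖v‖ * Complex.I ≠ 0 := hminus ▸ sub_ne_zero.mpr hz_minus
  rw [smul_one_sub_one_tmul_paravec hv, iotaP_eq, iotaM_eq, hplus, hminus]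
  have h₁ := smul_one_sub_smul_mul_spectral_sum hs ha hb
  have h₂ := spectral_sum_mul_smul_one_sub_smul hs ha hb
  exact ⟨⟨⟨_, _, h₁, h₂⟩, rfl⟩, h₁, h₂⟩

/-- for `ζ ∉ {s₊(κ), s₋(κ)}`, `ζ•1 - 1⊗κ` is a unit of `𝔎ₙ` with inverse
`(ζ - s₊(κ))⁻¹ • ι₊(κ) + (ζ - s₋(κ))⁻¹ • ι₋(κ)`. -/
theorem stmt5 {n : ℕ} (hn : 1 ≤ n)
    (Q : QuadraticForm ℝ (EuclideanSpace ℝ (Fin n)))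
    (hQ : ∀ v : EuclideanSpace ℝ (Fin n), Q v = -‖v‖ ^ 2)
    (x : ℝ) (v : EuclideanSpace ℝ (Fin n)) (hv : v ≠ 0)
    (zeta : ℂ) (hz : zeta ∉ ({sPlus x v, sMinus x v} : Set ℂ)) :
    IsUnit (zeta • (1 : ℂ ⊗[ℝ] CliffordAlgebra Q) - (1 : ℂ) ⊗ₜ[ℝ] paravec Q x v) ∧
    (zeta • (1 : ℂ ⊗[ℝ] CliffordAlgebra Q) - (1 : ℂ) ⊗ₜ[ℝ] paravec Q x v) *
        ((zeta - sPlus x v)⁻¹ • iotaP Q v + (zeta - sMinus x v)⁻¹ • iotaM Q v) = 1 ∧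
    ((zeta - sPlus x v)⁻¹ • iotaP Q v + (zeta - sMinus x v)⁻¹ • iotaM Q v) *
        (zeta • (1 : ℂ ⊗[ℝ] CliffordAlgebra Q) - (1 : ℂ) ⊗ₜ[ℝ] paravec Q x v) = 1 :=
  stmt5_general Q hQ x v hv zeta hz
end

section
/- Let U ⊆ ℂ be a conjugate symmetric set and let F, G : U → 𝔎ₙ be stem functions. If F_σ(κ) = G_σ(κ) for all κ ∈ U_σ, then F(ζ) = G(ζ) for all ζ ∈ U; i.e., the map F ↦ F_σ from stem functions on U to functions on U_σ is injective. -/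
open scoped TensorProduct

/-- The conjugation `χ` of the complexification `𝔎ₙ = ℂ ⊗[ℝ] 𝔠ₙ`, determined by
`χ(λ ⊗ a) = (conj λ) ⊗ a`. -/
noncomputable def chi {n : ℕ} (Q : QuadraticForm ℝ (EuclideanSpace ℝ (Fin n))) :
    (ℂ ⊗[ℝ] CliffordAlgebra Q) →ₐ[ℝ] ℂ ⊗[ℝ] CliffordAlgebra Q :=
  Algebra.TensorProduct.map Complex.conjAe.toAlgHom (AlgHom.id ℝ (CliffordAlgebra Q))

open Classical in
/-- The function `F_σ` induced on paravectors `(x, v)` by a `𝔎ₙ`-valued function `F`. -/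
noncomputable def Fsig {n : ℕ} (Q : QuadraticForm ℝ (EuclideanSpace ℝ (Fin n)))
    (F : ℂ → ℂ ⊗[ℝ] CliffordAlgebra Q) (x : ℝ) (v : EuclideanSpace ℝ (Fin n)) :
    ℂ ⊗[ℝ] CliffordAlgebra Q :=
  if v = 0 then F x
  else F (sPlus x v) * iotaP Q v + F (sMinus x v) * iotaM Q v

open Classical in
/-- The function `f_σ` induced on paravectors `(x, v)` by a complex-valued function `f`. -/
noncomputable def fsig {n : ℕ} (Q : QuadraticForm ℝ (EuclideanSpace ℝ (Fin n)))
    (f : ℂ → ℂ) (x : ℝ) (v : EuclideanSpace ℝ (Fin n)) :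
    ℂ ⊗[ℝ] CliffordAlgebra Q :=
  if v = 0 then f x • 1
  else f (sPlus x v) • iotaP Q v + f (sMinus x v) • iotaM Q v

/-!
Fix ζ and a vector `v` with `‖v‖ = |Im ζ|`, so that `{s₊, s₋} = {ζ, conj ζ}`. Replacing `v` by
`-v` fixes `s₊` and `s₋` but swaps `ι₊` and `ι₋`, so with `D = F s₊ - G s₊` and
`D' = F s₋ - G s₋` the hypothesis gives `D ι₊ + D' ι₋ = 0` and `D ι₋ + D' ι₊ = 0`. Since
`ι₊ + ι₋ = 1` and `(ι₊ - ι₋)² = 1` (because `𝔰_κ² = -1`), adding gives `D' = -D`, and then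
`D (ι₊ - ι₋) = 0` forces `D = 0`.
-/

theorem eq_zero_and_eq_zero_of_mul_add_mul_eq_zero {R : Type*} [Ring R] {P M D D' : R}
    (hPM : P + M = 1) (hu : IsUnit (P - M))
    (h₁ : D * P + D' * M = 0) (h₂ : D * M + D' * P = 0) : D = 0 ∧ D' = 0 := by
  have hsum : D + D' = 0 :=
    calc D + D' = D * (P + M) + D' * (P + M) := by rw [hPM, mul_one, mul_one]
      _ = (D * P + D' * M) + (D * M + D' * P) := by noncomm_ring
      _ = 0 := by rw [h₁, h₂, add_zero]
  obtain rfl : D' = -D := eq_neg_of_add_eq_zero_right hsum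
  have hD : D = 0 := hu.mul_left_eq_zero.mp <| by rw [← h₁]; noncomm_ring
  exact ⟨hD, by rw [hD, neg_zero]⟩

section Complexification

variable {n : ℕ} {Q : QuadraticForm ℝ (EuclideanSpace ℝ (Fin n))}

theorem iotaP_add_iotaM (v : EuclideanSpace ℝ (Fin n)) : iotaP Q v + iotaM Q v = 1 := by
  rw [iotaP, iotaM]; module

theorem iotaP_neg (v : EuclideanSpace ℝ (Fin n)) : iotaP Q (-v) = iotaM Q v := by
  rw [iotaP, iotaM, norm_neg, smul_neg, map_neg, TensorProduct.tmul_neg, smul_neg,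
    sub_neg_eq_add]

theorem iotaM_neg (v : EuclideanSpace ℝ (Fin n)) : iotaM Q (-v) = iotaP Q v := by
  rw [← iotaP_neg, neg_neg]

theorem iotaP_sub_iotaM_mul_self (hQ : ∀ v : EuclideanSpace ℝ (Fin n), Q v = -‖v‖ ^ 2)
    {v : EuclideanSpace ℝ (Fin n)} (hv : v ≠ 0) :
    (iotaP Q v - iotaM Q v) * (iotaP Q v - iotaM Q v) = 1 := by
  set u := ‖v‖⁻¹ • v
  have hu : Q u = -1 := by
    rw [hQ, show ‖u‖ = 1 by simp [u, norm_smul, hv]]; norm_num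
  have hsq :
      ((1 : ℂ) ⊗ₜ[ℝ] CliffordAlgebra.ι Q u) * ((1 : ℂ) ⊗ₜ[ℝ] CliffordAlgebra.ι Q u) = -1 := by
    rw [Algebra.TensorProduct.tmul_mul_tmul, one_mul, CliffordAlgebra.ι_sq_scalar, hu, map_neg,
      map_one, TensorProduct.tmul_neg, Algebra.TensorProduct.one_def]
  have hdiff : iotaP Q v - iotaM Q v = (-Complex.I) • (1 : ℂ) ⊗ₜ[ℝ] CliffordAlgebra.ι Q u := by
    rw [iotaP, iotaM]; module
  rw [hdiff, smul_mul_smul_comm, neg_mul_neg, Complex.I_mul_I, hsq, neg_one_smul, neg_neg]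

theorem isUnit_iotaP_sub_iotaM (hQ : ∀ v : EuclideanSpace ℝ (Fin n), Q v = -‖v‖ ^ 2)
    {v : EuclideanSpace ℝ (Fin n)} (hv : v ≠ 0) : IsUnit (iotaP Q v - iotaM Q v) :=
  isUnit_iff_exists.mpr ⟨_, iotaP_sub_iotaM_mul_self hQ hv, iotaP_sub_iotaM_mul_self hQ hv⟩

end Complexification

section Paravector

variable {n : ℕ}

@[simp] theorem sPlus_zero (x : ℝ) : sPlus x (0 : EuclideanSpace ℝ (Fin n)) = x := by
  simp [sPlus]

@[simp] theorem sMinus_zero (x : ℝ) : sMinus x (0 : EuclideanSpace ℝ (Fin n)) = x := by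
  simp [sMinus]

@[simp] theorem sPlus_neg (x : ℝ) (v : EuclideanSpace ℝ (Fin n)) :
    sPlus x (-v) = sPlus x v := by
  rw [sPlus, sPlus, norm_neg]

@[simp] theorem sMinus_neg (x : ℝ) (v : EuclideanSpace ℝ (Fin n)) :
    sMinus x (-v) = sMinus x v := by
  rw [sMinus, sMinus, norm_neg]

theorem pair_sPlus_sMinus_eq {ζ : ℂ} {v : EuclideanSpace ℝ (Fin n)} (hv : ‖v‖ = |ζ.im|) :
    ({sPlus ζ.re v, sMinus ζ.re v} : Set ℂ) = {ζ, starRingEnd ℂ ζ} := by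
  rcases abs_cases ζ.im with ⟨him, -⟩ | ⟨him, -⟩
  · have hp : sPlus ζ.re v = ζ := Complex.ext (by simp [sPlus]) (by simp [sPlus, hv, him])
    have hm : sMinus ζ.re v = starRingEnd ℂ ζ :=
      Complex.ext (by simp [sMinus]) (by simp [sMinus, hv, him])
    rw [hp, hm]
  · have hp : sPlus ζ.re v = starRingEnd ℂ ζ :=
      Complex.ext (by simp [sPlus]) (by simp [sPlus, hv, him])
    have hm : sMinus ζ.re v = ζ := Complex.ext (by simp [sMinus]) (by simp [sMinus, hv, him])
    rw [hp, hm, Set.pair_comm]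

variable {Q : QuadraticForm ℝ (EuclideanSpace ℝ (Fin n))} {F G : ℂ → ℂ ⊗[ℝ] CliffordAlgebra Q}

@[simp] theorem Fsig_zero (x : ℝ) : Fsig Q F x 0 = F x := if_pos rfl

theorem Fsig_of_ne_zero (x : ℝ) {v : EuclideanSpace ℝ (Fin n)} (hv : v ≠ 0) :
    Fsig Q F x v = F (sPlus x v) * iotaP Q v + F (sMinus x v) * iotaM Q v :=
  if_neg hv

theorem eq_at_sPlus_sMinus_of_Fsig_eq (hQ : ∀ v : EuclideanSpace ℝ (Fin n), Q v = -‖v‖ ^ 2)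
    {x : ℝ} {v : EuclideanSpace ℝ (Fin n)}
    (hp : Fsig Q F x v = Fsig Q G x v) (hm : Fsig Q F x (-v) = Fsig Q G x (-v)) :
    F (sPlus x v) = G (sPlus x v) ∧ F (sMinus x v) = G (sMinus x v) := by
  by_cases hv : v = 0
  · subst hv
    simp only [Fsig_zero, sPlus_zero, sMinus_zero] at hp ⊢
    exact ⟨hp, hp⟩
  rw [Fsig_of_ne_zero x hv, Fsig_of_ne_zero x hv] at hp
  rw [Fsig_of_ne_zero x (neg_ne_zero.mpr hv), Fsig_of_ne_zero x (neg_ne_zero.mpr hv), sPlus_neg,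
    sMinus_neg, iotaP_neg, iotaM_neg] at hm
  have hdiff := eq_zero_and_eq_zero_of_mul_add_mul_eq_zero (iotaP_add_iotaM v)
    (isUnit_iotaP_sub_iotaM hQ hv) (D := F (sPlus x v) - G (sPlus x v))
    (D' := F (sMinus x v) - G (sMinus x v))
    (by rw [sub_mul, sub_mul, sub_add_sub_comm, hp, sub_self])
    (by rw [sub_mul, sub_mul, sub_add_sub_comm, hm, sub_self])
  simpa only [sub_eq_zero] using hdiff

end Paravector

theorem stmt10_general {n : ℕ} (hn : 1 ≤ n)
    (Q : QuadraticForm ℝ (EuclideanSpace ℝ (Fin n)))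
    (hQ : ∀ v : EuclideanSpace ℝ (Fin n), Q v = -‖v‖ ^ 2)
    (U : Set ℂ) (hU : ∀ ζ : ℂ, ζ ∈ U ↔ (starRingEnd ℂ) ζ ∈ U)
    (F G : ℂ → ℂ ⊗[ℝ] CliffordAlgebra Q)
    (h : ∀ (x : ℝ) (v : EuclideanSpace ℝ (Fin n)), sPlus x v ∈ U → sMinus x v ∈ U →
      Fsig Q F x v = Fsig Q G x v) :
    ∀ ζ ∈ U, F ζ = G ζ := by
  intro ζ hζ
  obtain ⟨v, hv⟩ : ∃ v : EuclideanSpace ℝ (Fin n), ‖v‖ = |ζ.im| :=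
    ⟨EuclideanSpace.single ⟨0, hn⟩ ζ.im, by simp⟩
  have hpair := pair_sPlus_sMinus_eq hv
  obtain ⟨hp, hm⟩ : sPlus ζ.re v ∈ U ∧ sMinus ζ.re v ∈ U := by
    rw [← Set.pair_subset_iff, hpair]
    exact Set.pair_subset hζ ((hU ζ).1 hζ)
  have heq := eq_at_sPlus_sMinus_of_Fsig_eq hQ (h _ v hp hm)
    (h _ (-v) (by rwa [sPlus_neg]) (by rwa [sMinus_neg]))
  have hmem : ζ ∈ ({sPlus ζ.re v, sMinus ζ.re v} : Set ℂ) := hpair ▸ Set.mem_insert ζ _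
  rcases hmem with hζp | hζm
  · exact hζp ▸ heq.1
  · exact hζm ▸ heq.2

/-- the map `F ↦ F_σ`, from stem functions on a conjugate symmetric set `U`
to functions on `U_σ`, is injective. -/
theorem stmt10 {n : ℕ} (hn : 1 ≤ n)
    (Q : QuadraticForm ℝ (EuclideanSpace ℝ (Fin n)))
    (hQ : ∀ v : EuclideanSpace ℝ (Fin n), Q v = -‖v‖ ^ 2)
    (U : Set ℂ) (hU : ∀ ζ : ℂ, ζ ∈ U ↔ (starRingEnd ℂ) ζ ∈ U)
    (F G : ℂ → ℂ ⊗[ℝ] CliffordAlgebra Q)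
    (hF : ∀ ζ ∈ U, F ((starRingEnd ℂ) ζ) = chi Q (F ζ))
    (hG : ∀ ζ ∈ U, G ((starRingEnd ℂ) ζ) = chi Q (G ζ))
    (h : ∀ (x : ℝ) (v : EuclideanSpace ℝ (Fin n)), sPlus x v ∈ U → sMinus x v ∈ U →
      Fsig Q F x v = Fsig Q G x v) :
    ∀ ζ ∈ U, F ζ = G ζ :=
  stmt10_general hn Q hQ U hU F G h
end
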